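/- Let W₁^{h}(q,p) = (1/(πh))·(2(q²+p²)/h − 1)·e^{−(q²+p²)/h} denote the Wigner function of the first excited oscillator state for Planck constant h > 0, and W₀^{h'}(q,p) = (1/(πh'))·e^{−(q²+p²)/h'} the ground-state Wigner function for Planck constant h' > 0. If h' < h then ∫∫_{ℝ²} W₁^{h}(q,p)·W₀^{h'}(q,p) dq dp < 0. -/

import Mathlib

open Real MeasureTheory

/-- Wigner function of the first excited oscillator state at Planck constant `h`. -/
noncomputable def W1h (h q p : ℝ) : ℝ :=
  (1 / (π * h)) * (2 * (q ^ 2 + p ^ 2) / h - 1) * Real.exp (-(q ^ 2 + p ^ 2) / h)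

/-- Ground-state Wigner function at Planck constant `h'`. -/
noncomputable def W0h (h' q p : ℝ) : ℝ :=
  (1 / (π * h')) * Real.exp (-(q ^ 2 + p ^ 2) / h')

/-!
With `a = 1/h + 1/h'` the product `W₁^h W₀^{h'}` is `(2r²/h - 1) e^{-a r²} / (π² h h')`,
where `r² = q² + p²`. The planar Gaussian moments `∫ e^{-a r²} = π/a` and
`∫ r² e^{-a r²} = π/a²` (the second from the one-dimensional one, obtained by integrating the
derivative of `x e^{-b x²}`) make the overlap `(2/(ha) - 1) / (π h h' a)`, which is negative
because `ha = 1 + h/h' > 2`.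
-/

lemma integrable_sq_mul_exp_neg_mul_sq {b : ℝ} (hb : 0 < b) :
    Integrable fun x : ℝ => x ^ 2 * exp (-b * x ^ 2) := by
  simpa [rpow_two] using integrable_rpow_mul_exp_neg_mul_sq hb (s := 2) (by norm_num)

lemma integral_sq_mul_exp_neg_mul_sq {b : ℝ} (hb : 0 < b) :
    ∫ x : ℝ, x ^ 2 * exp (-b * x ^ 2) = √(π / b) / (2 * b) := by
  have hderiv (x : ℝ) : HasDerivAt (fun x : ℝ => x * exp (-b * x ^ 2))
      (exp (-b * x ^ 2) - 2 * b * (x ^ 2 * exp (-b * x ^ 2))) x := by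
    have hexp := ((hasDerivAt_pow 2 x).const_mul (-b)).exp
    exact ((hasDerivAt_id' x).mul hexp).congr_deriv (by ring)
  have hint := (integrable_sq_mul_exp_neg_mul_sq hb).const_mul (2 * b)
  have hzero := integral_eq_zero_of_hasDerivAt_of_integrable hderiv
    ((integrable_exp_neg_mul_sq hb).sub hint) (integrable_mul_exp_neg_mul_sq hb)
  rw [integral_sub (integrable_exp_neg_mul_sq hb) hint, integral_const_mul,
    integral_gaussian] at hzero
  rw [eq_div_iff (by positivity)]
  linarith

lemma exp_neg_mul_sq_add_sq (a q p : ℝ) :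
    exp (-a * (q ^ 2 + p ^ 2)) = exp (-a * q ^ 2) * exp (-a * p ^ 2) := by
  rw [← exp_add]
  ring_nf

lemma sq_add_sq_mul_exp_neg_mul_sq_add_sq (a q p : ℝ) :
    (q ^ 2 + p ^ 2) * exp (-a * (q ^ 2 + p ^ 2)) =
      q ^ 2 * exp (-a * q ^ 2) * exp (-a * p ^ 2) +
        exp (-a * q ^ 2) * (p ^ 2 * exp (-a * p ^ 2)) := by
  rw [exp_neg_mul_sq_add_sq]
  ring

section PlaneGaussian

variable {a : ℝ}

lemma integrable_exp_neg_mul_sq_add_sq (ha : 0 < a) :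
    Integrable fun x : ℝ × ℝ => exp (-a * (x.1 ^ 2 + x.2 ^ 2)) := by
  simp_rw [exp_neg_mul_sq_add_sq]
  exact (integrable_exp_neg_mul_sq ha).mul_prod (integrable_exp_neg_mul_sq ha)

-- At `a = 0` both sides are junk zeros: `π / 0 = 0`, and `∫ 1 = 0` as `1` is not integrable.
lemma integral_exp_neg_mul_sq_add_sq (ha : 0 ≤ a) :
    ∫ x : ℝ × ℝ, exp (-a * (x.1 ^ 2 + x.2 ^ 2)) = π / a := by
  simp_rw [exp_neg_mul_sq_add_sq]
  rw [Measure.volume_eq_prod,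
    integral_prod_mul (fun q => exp (-a * q ^ 2)) (fun p => exp (-a * p ^ 2)),
    integral_gaussian]
  exact mul_self_sqrt (by positivity)

lemma integrable_sq_add_sq_mul_exp_neg_mul_sq_add_sq (ha : 0 < a) :
    Integrable fun x : ℝ × ℝ => (x.1 ^ 2 + x.2 ^ 2) * exp (-a * (x.1 ^ 2 + x.2 ^ 2)) := by
  simp_rw [sq_add_sq_mul_exp_neg_mul_sq_add_sq]
  exact ((integrable_sq_mul_exp_neg_mul_sq ha).mul_prod (integrable_exp_neg_mul_sq ha)).add
    ((integrable_exp_neg_mul_sq ha).mul_prod (integrable_sq_mul_exp_neg_mul_sq ha))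

lemma integral_sq_add_sq_mul_exp_neg_mul_sq_add_sq (ha : 0 < a) :
    ∫ x : ℝ × ℝ, (x.1 ^ 2 + x.2 ^ 2) * exp (-a * (x.1 ^ 2 + x.2 ^ 2)) = π / a ^ 2 := by
  simp_rw [sq_add_sq_mul_exp_neg_mul_sq_add_sq]
  rw [Measure.volume_eq_prod, integral_add
    ((integrable_sq_mul_exp_neg_mul_sq ha).mul_prod (integrable_exp_neg_mul_sq ha))
    ((integrable_exp_neg_mul_sq ha).mul_prod (integrable_sq_mul_exp_neg_mul_sq ha)),
    integral_prod_mul (fun q => q ^ 2 * exp (-a * q ^ 2)) (fun p => exp (-a * p ^ 2)),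
    integral_prod_mul (fun q => exp (-a * q ^ 2)) (fun p => p ^ 2 * exp (-a * p ^ 2)),
    integral_sq_mul_exp_neg_mul_sq ha, integral_gaussian]
  have hsq : √(π / a) * √(π / a) = π / a := mul_self_sqrt (by positivity)
  calc _ = √(π / a) * √(π / a) / a := by ring
    _ = π / a ^ 2 := by rw [hsq, div_div, sq]

end PlaneGaussian

lemma W1h_mul_W0h (h h' q p : ℝ) :
    W1h h q p * W0h h' q p =
      2 / (π ^ 2 * h ^ 2 * h') * ((q ^ 2 + p ^ 2) * exp (-(1 / h + 1 / h') * (q ^ 2 + p ^ 2))) -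
        1 / (π ^ 2 * h * h') * exp (-(1 / h + 1 / h') * (q ^ 2 + p ^ 2)) := by
  have hexp : exp (-(q ^ 2 + p ^ 2) / h) * exp (-(q ^ 2 + p ^ 2) / h') =
      exp (-(1 / h + 1 / h') * (q ^ 2 + p ^ 2)) := by
    rw [← exp_add]
    ring_nf
  rw [W1h, W0h, ← hexp]
  ring

theorem two_plancks_overlap_negative_general (h h' : ℝ) (hh' : 0 < h') (hlt : h' < h) :
    (∫ x : ℝ × ℝ, W1h h x.1 x.2 * W0h h' x.1 x.2) < 0 := by
  have hh : 0 < h := hh'.trans hlt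
  simp_rw [W1h_mul_W0h]
  set a := 1 / h + 1 / h' with ha_def
  have ha : 0 < a := by positivity
  rw [integral_sub ((integrable_sq_add_sq_mul_exp_neg_mul_sq_add_sq ha).const_mul _)
      ((integrable_exp_neg_mul_sq_add_sq ha).const_mul _), integral_const_mul, integral_const_mul,
    integral_sq_add_sq_mul_exp_neg_mul_sq_add_sq ha, integral_exp_neg_mul_sq_add_sq ha.le, sub_neg]
  have hha : 2 < h * a := by
    rw [ha_def, mul_add, mul_one_div_cancel hh.ne', mul_one_div]
    linarith [(one_lt_div hh').mpr hlt]
  have hscale : 0 < 1 / (π * h * h' * a) := by positivity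
  calc 2 / (π ^ 2 * h ^ 2 * h') * (π / a ^ 2) = 2 / (h * a) * (1 / (π * h * h' * a)) := by
        field_simp
    _ < 1 * (1 / (π * h * h' * a)) :=
        mul_lt_mul_of_pos_right ((div_lt_one (by positivity)).mpr hha) hscale
    _ = 1 / (π ^ 2 * h * h') * (π / a) := by
        field_simp

theorem two_plancks_overlap_negative (h h' : ℝ) (hh : 0 < h) (hh' : 0 < h') (hlt : h' < h) :
    (∫ x : ℝ × ℝ, W1h h x.1 x.2 * W0h h' x.1 x.2) < 0 :=
  two_plancks_overlap_negative_general h h' hh' hlt
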